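/- Let L be a Cayley table of a finite group G of order n. If L contains a maximal partial transversal of length ℓ with ℓ < (3/5)n, then n is even, G contains a subgroup of index 2, and ℓ - n/2 is even. -/

import Mathlib

/-- The Cayley table of a group `G` as a set of triples `(g, h, g*h)`. -/
def cayleyTable (G : Type*) [Group G] [Fintype G] [DecidableEq G] :
    Finset (G × G × G) :=
  Finset.univ.image (fun p : G × G => (p.1, p.2, p.1 * p.2))

/-- A partial transversal: a subset of the triples with pairwise distinct
rows, columns and symbols. -/
def IsPartialTransversal {α β γ : Type*} (L T : Finset (α × β × γ)) : Prop :=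
  T ⊆ L ∧ ∀ t ∈ T, ∀ t' ∈ T, t ≠ t' →
    t.1 ≠ t'.1 ∧ t.2.1 ≠ t'.2.1 ∧ t.2.2 ≠ t'.2.2

/-- A maximal partial transversal. -/
def IsMaximalPartialTransversal {α β γ : Type*} (L T : Finset (α × β × γ)) : Prop :=
  IsPartialTransversal L T ∧
    ∀ T' : Finset (α × β × γ), IsPartialTransversal L T' → T ⊆ T' → T' = T


/-!
Let `A`, `B`, `C` be the rows, columns and symbols missed by `T`. Each has `m = n - ℓ > 2n/5`
elements and maximality says that `A * B` misses `C`, so `|A * B| ≤ n - m < 3m/2`. Such a small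
product set forces `B * B⁻¹ ⊆ A⁻¹ * A`, which makes the symmetry set
`K = {g | |gB ∩ B| > |B|/2}` a subgroup; a double count gives `m ≤ |K| < 2m`, so `K` has index
two, `A` and `B` lie in single cosets of `K`, and `C` lies in the coset opposite to `A * B`.
Modulo `K`, every triple `(g, h, gh)` has an even number of entries outside `K`, while the
missed rows, columns and symbols have `m` or `3m` entries outside `K` and all rows, columns and
symbols together have `3|K|`; hence `|K| ≡ m (mod 2)`.
-/

open Finset
open scoped Pointwise

lemma Subgroup.index_eq_two_of_card_lt {G : Type*} [Group G] [Finite G] {H : Subgroup G}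
    (hH : H ≠ ⊤) (hcard : Nat.card G < 3 * Nat.card H) : H.index = 2 := by
  have hmul := H.card_mul_index
  have hlt : H.index < 3 := by
    by_contra! h
    nlinarith
  have := H.one_lt_index_of_ne_top hH
  omega

section SmallProduct

variable {G : Type*} [Group G] [DecidableEq G]

lemma mul_inv_subset_inv_mul {A B : Finset G} (h : #(A * B) < 2 * #A) : B * B⁻¹ ⊆ A⁻¹ * A := by
  intro x hx
  obtain ⟨b, hb, _, hc, rfl⟩ := mem_mul.1 hx
  obtain ⟨b', hb', rfl⟩ := mem_inv.1 hc
  obtain ⟨y, hy⟩ := inter_nonempty_of_card_lt_card_add_card (op_smul_finset_subset_mul hb)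
    (op_smul_finset_subset_mul hb') (by simpa only [card_smul_finset, ← two_mul] using h)
  simp only [mem_inter, mem_smul_finset, op_smul_eq_mul] at hy
  obtain ⟨⟨a, ha, rfl⟩, a', ha', hy⟩ := hy
  refine mem_mul.2 ⟨a⁻¹, inv_mem_inv ha, a', ha', ?_⟩
  rw [eq_mul_inv_iff_mul_eq, mul_assoc, hy, inv_mul_cancel_left]

variable [Fintype G] {A B : Finset G} {g h : G}

-- The strict symmetry set `Sym_{1/2}(B)` of additive combinatorics.
def halfSymmetrySet (B : Finset G) : Finset G := {g | #B < 2 * #(g • B ∩ B)}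

@[simp]
lemma mem_halfSymmetrySet : g ∈ halfSymmetrySet B ↔ #B < 2 * #(g • B ∩ B) := by
  simp [halfSymmetrySet]

lemma sum_convolution (A B : Finset G) : ∑ x : G, A.convolution B x = #A * #B := by
  rw [← card_product, card_eq_sum_card_fiberwise (f := fun ab : G × G => ab.1 * ab.2)
    (t := (univ : Finset G)) fun _ _ => mem_coe.2 (mem_univ _)]
  rfl

lemma sum_card_smul_inter_self (B : Finset G) : ∑ g : G, #(g • B ∩ B) = #B * #B := by
  simp_rw [card_smul_inter]
  rw [Fintype.sum_equiv (Equiv.inv G) (fun x => B.convolution B⁻¹ x⁻¹) _ fun _ => rfl,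
    sum_convolution, card_inv]

lemma card_halfSymmetrySet_lt (hB : B.Nonempty) : #(halfSymmetrySet B) < 2 * #B := by
  have hsum : #(halfSymmetrySet B) * (#B + 1) ≤ 2 * (#B * #B) :=
    calc #(halfSymmetrySet B) * (#B + 1) = ∑ _g ∈ halfSymmetrySet B, (#B + 1) := by
          rw [sum_const, smul_eq_mul]
      _ ≤ ∑ g ∈ halfSymmetrySet B, 2 * #(g • B ∩ B) :=
          sum_le_sum fun g hg => mem_halfSymmetrySet.1 hg
      _ ≤ ∑ g, 2 * #(g • B ∩ B) := sum_le_sum_of_subset (subset_univ _)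
      _ = 2 * (#B * #B) := by rw [← mul_sum, sum_card_smul_inter_self]
  nlinarith [hB.card_pos]

lemma one_mem_halfSymmetrySet (hB : B.Nonempty) : 1 ∈ halfSymmetrySet B := by
  simpa [two_mul] using hB.card_pos

lemma inv_mem_halfSymmetrySet (hg : g ∈ halfSymmetrySet B) : g⁻¹ ∈ halfSymmetrySet B := by
  rw [mem_halfSymmetrySet] at hg ⊢
  rwa [← card_smul_finset g (_ ∩ B), smul_finset_inter, smul_inv_smul, inter_comm]

lemma mul_mem_mul_inv_of_mem_halfSymmetrySet (hg : g ∈ halfSymmetrySet B)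
    (hh : h ∈ halfSymmetrySet B) : g * h ∈ B * B⁻¹ := by
  have hg' := mem_halfSymmetrySet.1 (inv_mem_halfSymmetrySet hg)
  rw [mem_halfSymmetrySet] at hh
  obtain ⟨y, hy⟩ := inter_nonempty_of_card_lt_card_add_card
    (inter_subset_right (s₁ := h • B) (s₂ := B)) (inter_subset_right (s₁ := g⁻¹ • B) (s₂ := B))
    (by omega)
  simp only [mem_inter, mem_smul_finset, smul_eq_mul] at hy
  obtain ⟨⟨⟨b, hb, rfl⟩, -⟩, ⟨b', hb', hy⟩, -⟩ := hy
  refine mem_mul.2 ⟨b', hb', b⁻¹, inv_mem_inv hb, ?_⟩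
  rw [inv_mul_eq_iff_eq_mul.1 hy, ← mul_assoc, mul_inv_cancel_right]

def halfSymmetrySubgroup (hB : B.Nonempty) (hBB : B * B⁻¹ ⊆ halfSymmetrySet B) :
    Subgroup G where
  carrier := halfSymmetrySet B
  one_mem' := one_mem_halfSymmetrySet hB
  mul_mem' hg hh := hBB (mul_mem_mul_inv_of_mem_halfSymmetrySet hg hh)
  inv_mem' := inv_mem_halfSymmetrySet

lemma card_halfSymmetrySubgroup (hB : B.Nonempty) (hBB : B * B⁻¹ ⊆ halfSymmetrySet B) :
    Nat.card (halfSymmetrySubgroup hB hBB) = #(halfSymmetrySet B) :=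
  Nat.card_eq_finsetCard _

lemma inv_mul_mem_halfSymmetrySet (h : 2 * #(A * B) < 3 * #B) {a a' : G} (ha : a ∈ A)
    (ha' : a' ∈ A) : a⁻¹ * a' ∈ halfSymmetrySet B := by
  rw [mem_halfSymmetrySet, ← card_smul_finset a (_ ∩ B), smul_finset_inter, smul_smul,
    mul_inv_cancel_left]
  have hunion : #(a' • B ∪ a • B) ≤ #(A * B) :=
    card_le_card (union_subset (smul_finset_subset_mul ha') (smul_finset_subset_mul ha))
  have := card_inter_add_card_union (a' • B) (a • B)
  rw [card_smul_finset, card_smul_finset] at this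
  omega

lemma mem_mul_of_inv_mul_mul_inv_mem {H : Subgroup G} {a b z : G}
    (hA : ∀ x ∈ A, a⁻¹ * x ∈ H) (hB : ∀ y ∈ B, y * b⁻¹ ∈ H) (hcard : Nat.card H < #A + #B)
    (hz : a⁻¹ * z * b⁻¹ ∈ H) : z ∈ A * B := by
  classical
  have hAH : A.image (fun x => x⁻¹ * z * b⁻¹) ⊆ ({g | g ∈ H} : Finset G) := fun g hg => by
    obtain ⟨x, hx, rfl⟩ := mem_image.1 hg
    simpa [mul_assoc] using H.mul_mem (H.inv_mem (hA x hx)) hz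
  have hBH : B.image (· * b⁻¹) ⊆ ({g | g ∈ H} : Finset G) := fun g hg => by
    obtain ⟨y, hy, rfl⟩ := mem_image.1 hg
    simpa using hB y hy
  obtain ⟨g, hg⟩ := inter_nonempty_of_card_lt_card_add_card hAH hBH <| by
    rwa [card_image_of_injective _ fun x y h => by simpa using h,
      card_image_of_injective _ (mul_left_injective _), ← Fintype.card_subtype,
      ← Nat.card_eq_fintype_card]
  simp only [mem_inter, mem_image] at hg
  obtain ⟨⟨x, hx, rfl⟩, y, hy, hxy⟩ := hg
  refine mem_mul.2 ⟨x, hx, y, hy, ?_⟩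
  rw [mul_left_inj] at hxy
  rw [hxy, mul_inv_cancel_left]

theorem exists_index_two_of_disjoint_mul {C : Finset G} (hA : #A = #C) (hB : #B = #C)
    (hC : 2 * Fintype.card G < 5 * #C) (hABC : Disjoint (A * B) C) :
    ∃ H : Subgroup G, H.index = 2 ∧ ∃ a b : G,
      (∀ x ∈ A, a⁻¹ * x ∈ H) ∧ (∀ y ∈ B, y * b⁻¹ ∈ H) ∧ ∀ z ∈ C, a⁻¹ * z * b⁻¹ ∉ H := by
  obtain ⟨a, ha⟩ : A.Nonempty := card_pos.1 (by omega)
  obtain ⟨b, hb⟩ : B.Nonempty := card_pos.1 (by omega)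
  obtain ⟨c, hc⟩ : C.Nonempty := card_pos.1 (by omega)
  have hAB : #(A * B) + #C ≤ Fintype.card G :=
    (card_union_of_disjoint hABC).symm.trans_le (card_le_univ _)
  have hBB : B * B⁻¹ ⊆ halfSymmetrySet B := fun x hx => by
    obtain ⟨_, hinv, a₂, ha₂, rfl⟩ := mem_mul.1 (mul_inv_subset_inv_mul (A := A) (by omega) hx)
    obtain ⟨a₁, ha₁, rfl⟩ := mem_inv.1 hinv
    exact inv_mul_mem_halfSymmetrySet (by omega) ha₁ ha₂
  let H := halfSymmetrySubgroup ⟨b, hb⟩ hBB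
  have hcard : Nat.card H = #(halfSymmetrySet B) := card_halfSymmetrySubgroup _ _
  have hA' : ∀ x ∈ A, a⁻¹ * x ∈ H := fun x hx => inv_mul_mem_halfSymmetrySet (by omega) ha hx
  have hB' : ∀ y ∈ B, y * b⁻¹ ∈ H := fun y hy => hBB (mul_mem_mul hy (inv_mem_inv hb))
  have hHA : #A ≤ Nat.card H := by
    rw [hcard, ← card_smul_finset a⁻¹ A]
    exact card_le_card fun _ hy => by
      obtain ⟨x, hx, rfl⟩ := mem_smul_finset.1 hy
      exact hA' x hx
  have hHAB : Nat.card H < #A + #B := by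
    have := card_halfSymmetrySet_lt ⟨b, hb⟩
    omega
  have hC' : ∀ z ∈ C, a⁻¹ * z * b⁻¹ ∉ H := fun z hz hzH =>
    disjoint_left.1 hABC (mem_mul_of_inv_mul_mul_inv_mem hA' hB' hHAB hzH) hz
  refine ⟨H, H.index_eq_two_of_card_lt (fun htop => hC' c hc (htop ▸ Subgroup.mem_top _)) ?_,
    a, b, hA', hB', hC'⟩
  rw [Nat.card_eq_fintype_card]
  omega

end SmallProduct

section CosetParity

variable {G : Type*} [Group G] (H : Subgroup G) [DecidablePred (· ∈ H)]

def Subgroup.cosetParity (g : G) : ZMod 2 := if g ∈ H then 0 else 1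

variable {H}

lemma Subgroup.cosetParity_of_mem {g : G} (hg : g ∈ H) : H.cosetParity g = 0 := if_pos hg

lemma Subgroup.cosetParity_of_notMem {g : G} (hg : g ∉ H) : H.cosetParity g = 1 := if_neg hg

lemma Subgroup.cosetParity_mul (hH : H.index = 2) (g h : G) :
    H.cosetParity (g * h) = H.cosetParity g + H.cosetParity h := by
  simp only [cosetParity, mul_mem_iff_of_index_two hH]
  split_ifs <;> first | rfl | tauto

lemma Subgroup.sum_cosetParity [Fintype G] (hH : H.index = 2) :
    ∑ g, H.cosetParity g = Nat.card H := by
  have hsplit := card_filter_add_card_filter_not (s := univ) (· ∈ H)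
  have hindex := H.card_mul_index
  rw [hH, Nat.card_eq_fintype_card (α := G), ← card_univ] at hindex
  rw [Nat.card_eq_fintype_card, Fintype.card_subtype] at hindex ⊢
  simp only [cosetParity, sum_ite, sum_const_zero, zero_add, sum_const, nsmul_one]
  congr 1
  omega

end CosetParity

section Transversal

variable {α β γ : Type*}

def rowsOf [DecidableEq α] (T : Finset (α × β × γ)) : Finset α := T.image Prod.fst

def colsOf [DecidableEq β] (T : Finset (α × β × γ)) : Finset β := T.image fun t => t.2.1

def symbolsOf [DecidableEq γ] (T : Finset (α × β × γ)) : Finset γ := T.image fun t => t.2.2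

namespace IsPartialTransversal

variable {L T : Finset (α × β × γ)}

lemma injOn_row (hT : IsPartialTransversal L T) : Set.InjOn Prod.fst (T : Set (α × β × γ)) :=
  fun t ht t' ht' h => by_contra fun hne => (hT.2 t ht t' ht' hne).1 h

lemma injOn_col (hT : IsPartialTransversal L T) :
    Set.InjOn (fun t : α × β × γ => t.2.1) (T : Set (α × β × γ)) :=
  fun t ht t' ht' h => by_contra fun hne => (hT.2 t ht t' ht' hne).2.1 h

lemma injOn_symbol (hT : IsPartialTransversal L T) :
    Set.InjOn (fun t : α × β × γ => t.2.2) (T : Set (α × β × γ)) :=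
  fun t ht t' ht' h => by_contra fun hne => (hT.2 t ht t' ht' hne).2.2 h

lemma card_rowsOf [DecidableEq α] (hT : IsPartialTransversal L T) : #(rowsOf T) = #T :=
  card_image_of_injOn hT.injOn_row

lemma card_colsOf [DecidableEq β] (hT : IsPartialTransversal L T) : #(colsOf T) = #T :=
  card_image_of_injOn hT.injOn_col

lemma card_symbolsOf [DecidableEq γ] (hT : IsPartialTransversal L T) : #(symbolsOf T) = #T :=
  card_image_of_injOn hT.injOn_symbol

lemma insert [DecidableEq α] [DecidableEq β] [DecidableEq γ] {t : α × β × γ}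
    (hT : IsPartialTransversal L T) (ht : t ∈ L) (hrow : t.1 ∉ rowsOf T)
    (hcol : t.2.1 ∉ colsOf T) (hsym : t.2.2 ∉ symbolsOf T) :
    IsPartialTransversal L (insert t T) := by
  refine ⟨insert_subset ht hT.1, ?_⟩
  have hnew : ∀ s ∈ T, t.1 ≠ s.1 ∧ t.2.1 ≠ s.2.1 ∧ t.2.2 ≠ s.2.2 := fun s hs =>
    ⟨fun h => hrow (mem_image.2 ⟨s, hs, h.symm⟩), fun h => hcol (mem_image.2 ⟨s, hs, h.symm⟩),
      fun h => hsym (mem_image.2 ⟨s, hs, h.symm⟩)⟩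
  simp only [mem_insert, forall_eq_or_imp]
  refine ⟨⟨fun h => (h rfl).elim, fun s hs _ => hnew s hs⟩,
    fun s hs => ⟨fun _ => (hnew s hs).imp Ne.symm (And.imp Ne.symm Ne.symm), hT.2 s hs⟩⟩

end IsPartialTransversal

end Transversal

section CayleyTable

variable {G : Type*} [Group G] [Fintype G] [DecidableEq G] {T : Finset (G × G × G)}

lemma IsMaximalPartialTransversal.disjoint_mul
    (hT : IsMaximalPartialTransversal (cayleyTable G) T) :
    Disjoint ((rowsOf T)ᶜ * (colsOf T)ᶜ) (symbolsOf T)ᶜ := by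
  refine disjoint_left.2 fun z hz hzC => ?_
  obtain ⟨a, ha, b, hb, rfl⟩ := mem_mul.1 hz
  rw [mem_compl] at ha hb hzC
  have hmem : (a, b, a * b) ∈ cayleyTable G := mem_image.2 ⟨(a, b), mem_univ _, rfl⟩
  have hins := hT.2 _ (hT.1.insert hmem ha hb hzC) (subset_insert _ _)
  exact ha (mem_image.2 ⟨_, hins ▸ mem_insert_self _ _, rfl⟩)

namespace IsPartialTransversal

variable {H : Subgroup G} [DecidablePred (· ∈ H)]

lemma sum_cosetParity_eq_zero (hT : IsPartialTransversal (cayleyTable G) T)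
    (hH : H.index = 2) :
    ∑ x ∈ rowsOf T, H.cosetParity x + ∑ y ∈ colsOf T, H.cosetParity y +
      ∑ z ∈ symbolsOf T, H.cosetParity z = 0 := by
  rw [rowsOf, colsOf, symbolsOf, sum_image hT.injOn_row, sum_image hT.injOn_col,
    sum_image hT.injOn_symbol, ← sum_add_distrib, ← sum_add_distrib]
  refine sum_eq_zero fun t ht => ?_
  obtain ⟨⟨g, h⟩, -, rfl⟩ := mem_image.1 (hT.1 ht)
  rw [H.cosetParity_mul hH]
  exact CharTwo.add_self_eq_zero _

theorem natCast_card_subgroup_eq (hT : IsPartialTransversal (cayleyTable G) T)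
    (hH : H.index = 2) {a b : G} (hA : ∀ x ∈ (rowsOf T)ᶜ, a⁻¹ * x ∈ H)
    (hB : ∀ y ∈ (colsOf T)ᶜ, y * b⁻¹ ∈ H) (hC : ∀ z ∈ (symbolsOf T)ᶜ, a⁻¹ * z * b⁻¹ ∉ H) :
    (Nat.card H : ZMod 2) = (Fintype.card G - #T : ℕ) := by
  set m := Fintype.card G - #T
  have hcompl (s : Finset G) (c : ZMod 2) (hs : #s = #T)
      (hc : ∀ x ∈ sᶜ, H.cosetParity x = c) : ∑ x ∈ s, H.cosetParity x + m * c = Nat.card H := by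
    rw [← H.sum_cosetParity hH, ← sum_add_sum_compl s, sum_congr rfl hc, sum_const, card_compl,
      hs, nsmul_eq_mul]
  have hrows := hcompl _ (H.cosetParity a) hT.card_rowsOf fun x hx => by
    rw [← mul_inv_cancel_left a x, H.cosetParity_mul hH, H.cosetParity_of_mem (hA x hx),
      add_zero]
  have hcols := hcompl _ (H.cosetParity b) hT.card_colsOf fun y hy => by
    rw [← inv_mul_cancel_right y b, H.cosetParity_mul hH, H.cosetParity_of_mem (hB y hy),
      zero_add]
  have hsymbols := hcompl _ (H.cosetParity a + 1 + H.cosetParity b) hT.card_symbolsOf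
    fun z hz => by
      rw [show z = a * (a⁻¹ * z * b⁻¹) * b by group, H.cosetParity_mul hH, H.cosetParity_mul hH,
        H.cosetParity_of_notMem (hC z hz)]
  have htwo : (2 : ZMod 2) = 0 := rfl
  linear_combination -(hrows + hcols + hsymbols - hT.sum_cosetParity_eq_zero hH) +
    (m * (H.cosetParity a + H.cosetParity b) - Nat.card H) * htwo

end IsPartialTransversal

end CayleyTable

theorem stmt13 {G : Type*} [Group G] [Fintype G] [DecidableEq G]
    (T : Finset (G × G × G))
    (hT : IsMaximalPartialTransversal (cayleyTable G) T)
    (hlen : 5 * T.card < 3 * Fintype.card G) :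
    Even (Fintype.card G) ∧ (∃ H : Subgroup G, H.index = 2) ∧
      Even (T.card - Fintype.card G / 2) := by
  classical
  obtain ⟨H, hH, a, b, hA, hB, hC⟩ := exists_index_two_of_disjoint_mul
    (by rw [card_compl, card_compl, hT.1.card_rowsOf, hT.1.card_symbolsOf])
    (by rw [card_compl, card_compl, hT.1.card_colsOf, hT.1.card_symbolsOf])
    (by rw [card_compl, hT.1.card_symbolsOf]; omega) hT.disjoint_mul
  have hparity := hT.1.natCast_card_subgroup_eq hH hA hB hC
  rw [ZMod.natCast_eq_natCast_iff'] at hparity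
  have hindex : Nat.card H * 2 = Fintype.card G := by
    rw [← hH, H.card_mul_index, Nat.card_eq_fintype_card]
  refine ⟨⟨Nat.card H, by omega⟩, ⟨H, hH⟩, ?_⟩
  rw [Nat.even_iff]
  omega
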